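/- arXiv:1709.04929 — 2 statements merged into one kernel-verified Lean document; each statement's English description precedes it below -/
import Mathlib

section
/- Let a, a', b, b' be real numbers with a² + b² = 1 and a·a' + b·b' = 0, and let v, w ∈ ℂ^m. Then ‖2aa'v + a²w‖² + 2‖(a'b + ab')v + abw‖² + ‖2bb'v + b²w‖² = ‖w‖² + 2(a'b − ab')²‖v‖². -/
open scoped RealInnerProductSpace

theorem norm_smul_add_smul_sq {E : Type*} [NormedAddCommGroup E] [InnerProductSpace ℝ E]
    (c d : ℝ) (v w : E) :
    ‖c • v + d • w‖ ^ 2 = c ^ 2 * ‖v‖ ^ 2 + 2 * (c * d) * ⟪v, w⟫ + d ^ 2 * ‖w‖ ^ 2 := by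
  rw [norm_add_sq_real, inner_smul_left, inner_smul_right, norm_smul, norm_smul,
    mul_pow, mul_pow, Real.norm_eq_abs, Real.norm_eq_abs, sq_abs, sq_abs]
  simp only [conj_trivial]
  ring

theorem norm_combination_identity_general (m : ℕ) (a a' b b' : ℝ)
    (h1 : a ^ 2 + b ^ 2 = 1) (h2 : a * a' + b * b' = 0)
    (v w : EuclideanSpace ℂ (Fin m)) :
    ‖((2 * a * a' : ℝ) : ℂ) • v + ((a ^ 2 : ℝ) : ℂ) • w‖ ^ 2 +
      2 * ‖((a' * b + a * b' : ℝ) : ℂ) • v + ((a * b : ℝ) : ℂ) • w‖ ^ 2 +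
      ‖((2 * b * b' : ℝ) : ℂ) • v + ((b ^ 2 : ℝ) : ℂ) • w‖ ^ 2 =
      ‖w‖ ^ 2 + 2 * (a' * b - a * b') ^ 2 * ‖v‖ ^ 2 := by
  simp only [Complex.coe_smul, norm_smul_add_smul_sq]
  linear_combination (a ^ 2 + b ^ 2 + 1) * ‖w‖ ^ 2 * h1 +
    (4 * (a * a' + b * b') * ‖v‖ ^ 2 + 4 * (a ^ 2 + b ^ 2) * ⟪v, w⟫) * h2

/-- Let `a, a', b, b'` be real numbers with `a² + b² = 1` and
`a·a' + b·b' = 0`, and let `v, w ∈ ℂ^m` (with `m ≥ 1`). Then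
`‖2aa'v + a²w‖² + 2‖(a'b + ab')v + abw‖² + ‖2bb'v + b²w‖²
  = ‖w‖² + 2(a'b − ab')²‖v‖²`. -/
theorem norm_combination_identity (m : ℕ) (hm : 1 ≤ m) (a a' b b' : ℝ)
    (h1 : a ^ 2 + b ^ 2 = 1) (h2 : a * a' + b * b' = 0)
    (v w : EuclideanSpace ℂ (Fin m)) :
    ‖((2 * a * a' : ℝ) : ℂ) • v + ((a ^ 2 : ℝ) : ℂ) • w‖ ^ 2 +
      2 * ‖((a' * b + a * b' : ℝ) : ℂ) • v + ((a * b : ℝ) : ℂ) • w‖ ^ 2 +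
      ‖((2 * b * b' : ℝ) : ℂ) • v + ((b ^ 2 : ℝ) : ℂ) • w‖ ^ 2 =
      ‖w‖ ^ 2 + 2 * (a' * b - a * b') ^ 2 * ‖v‖ ^ 2 :=
  norm_combination_identity_general m a a' b b' h1 h2 v w
end

section
/- Let y : ℝ → ℂ^m be compactly supported and locally absolutely continuous with a.e. derivative g (i.e. y(b) − y(a) = ∫_a^b g(x) dx for all a ≤ b with g locally integrable), let z : ℝ → ℂ^m be locally absolutely continuous with a.e. derivative h, and suppose z(x) = g(x) − Q(x)y(x) for a.e. x ∈ ℝ. Define y^{[2]}(x) := h(x) + Q(x)z(x) + Q(x)²y(x) for a.e. x, and assume that ⟨y^{[2]}, y⟩, ‖g‖², and ⟨Qg, y⟩ are integrable over ℝ. Then −∫_ℝ ⟨y^{[2]}, y⟩ dx = ∫_ℝ ( ⟨z, g⟩ − ⟨Qg, y⟩ ) dx = ∫_ℝ ( ‖g‖² − 2 Re ⟨Qg, y⟩ ) dx. -/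
/-!
Integration by parts for the pairing `⟪y, z⟫` shows `∫ (⟪g, z⟫ + ⟪y, h⟫) = 0`, since `y` has
compact support. Substituting `z = g - Q y` and moving `Q` across the inner product (`Q` is
Hermitian) turns `⟪y, h⟫` into `⟪y, y^{[2]}⟫ - ⟪y, Q g⟫` and `⟪g, z⟫` into `‖g‖² - conj ⟪y, Q g⟫`.

As `y` and `z` are only primitives of locally integrable functions, integration by parts is proved
by Fubini: the square `(a, b]²` is cut along its diagonal and `⟪g s, h t⟫` is integrated over
each triangle.
-/

open MeasureTheory

noncomputable section

def matApply {m : ℕ} (M : Matrix (Fin m) (Fin m) ℂ) (v : EuclideanSpace ℂ (Fin m)) :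
    EuclideanSpace ℂ (Fin m) := Matrix.toEuclideanLin M v

theorem matApply_add {m : ℕ} (M : Matrix (Fin m) (Fin m) ℂ) (u v : EuclideanSpace ℂ (Fin m)) :
    matApply M (u + v) = matApply M u + matApply M v :=
  map_add _ u v

open Set
open scoped InnerProductSpace

section InnerProduct

variable {𝕜 E : Type*} [RCLike 𝕜] [NormedAddCommGroup E] [InnerProductSpace 𝕜 E]

theorem LinearMap.IsSymmetric.inner_sub_apply_sub_inner {T : E →ₗ[𝕜] E} (hT : T.IsSymmetric)
    (g y : E) :
    ⟪g, g - T y⟫_𝕜 - ⟪y, T g⟫_𝕜 = ((‖g‖ ^ 2 - 2 * RCLike.re ⟪y, T g⟫_𝕜 : ℝ) : 𝕜) := by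
  have h2re := RCLike.add_conj ⟪y, T g⟫_𝕜
  rw [inner_sub_right, inner_self_eq_norm_sq_to_K, ← hT, ← inner_conj_symm (T g) y]
  push_cast at h2re ⊢
  linear_combination -h2re

theorem integral_inner_left [CompleteSpace E] [NormedSpace ℝ E] {α : Type*} [MeasurableSpace α]
    {μ : Measure α} {f : α → E} (hf : Integrable f μ) (c : E) :
    ∫ x, ⟪f x, c⟫_𝕜 ∂μ = ⟪∫ x, f x ∂μ, c⟫_𝕜 := by
  simp_rw [← inner_conj_symm _ c]
  rw [integral_conj, integral_inner hf, inner_conj_symm]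

section

variable {X : Type*} [TopologicalSpace X] [T2Space X] [MeasurableSpace X] [OpensMeasurableSpace X]
  [SecondCountableTopologyEither X E] {μ : Measure X} {K : Set X} {f g : X → E}

theorem MeasureTheory.IntegrableOn.inner_continuousOn (hK : IsCompact K) (hf : IntegrableOn f K μ)
    (hg : ContinuousOn g K) : IntegrableOn (fun x => ⟪f x, g x⟫_𝕜) K μ := by
  obtain ⟨C, hC⟩ := hK.exists_bound_of_continuousOn hg
  refine (hf.norm.mul_const C).mono' ?_ ?_
  · exact continuous_inner.comp_aestronglyMeasurable
      (hf.aestronglyMeasurable.prodMk (hg.aestronglyMeasurable hK.measurableSet))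
  · filter_upwards [ae_restrict_mem hK.measurableSet] with x hx
    exact (norm_inner_le_norm _ _).trans (by gcongr; exact hC x hx)

theorem MeasureTheory.IntegrableOn.continuousOn_inner (hK : IsCompact K) (hf : IntegrableOn f K μ)
    (hg : ContinuousOn g K) : IntegrableOn (fun x => ⟪g x, f x⟫_𝕜) K μ := by
  refine Integrable.congr ?_ (Filter.Eventually.of_forall fun x => inner_conj_symm (g x) (f x))
  exact (RCLike.conjCLE (K := 𝕜)).toContinuousLinearMap.integrable_comp
    (IntegrableOn.inner_continuousOn hK hf hg)

end

variable [CompleteSpace E] [NormedSpace ℝ E]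

theorem integral_inner_primitive_add_integral_primitive_inner {a b : ℝ} (hab : a ≤ b)
    {φ ψ : ℝ → E} (hφ : IntervalIntegrable φ volume a b) (hψ : IntervalIntegrable ψ volume a b) :
    (∫ x in a..b, ⟪φ x, ∫ t in a..x, ψ t⟫_𝕜) + ∫ x in a..b, ⟪∫ t in a..x, φ t, ψ x⟫_𝕜 =
      ⟪∫ x in a..b, φ x, ∫ x in a..b, ψ x⟫_𝕜 := by
  rw [intervalIntegrable_iff_integrableOn_Ioc_of_le hab] at hφ hψ
  simp only [intervalIntegral.integral_of_le hab]
  set μ := volume.restrict (Ioc a b)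
  set F : ℝ × ℝ → 𝕜 := fun p => ⟪φ p.1, ψ p.2⟫_𝕜
  have hF : Integrable F (μ.prod μ) := by
    refine (hφ.norm.mul_prod hψ.norm).mono' ?_ (.of_forall fun p => norm_inner_le_norm _ _)
    exact continuous_inner.comp_aestronglyMeasurable
      (hφ.aestronglyMeasurable.comp_fst.prodMk hψ.aestronglyMeasurable.comp_snd)
  have hS : MeasurableSet {p : ℝ × ℝ | p.2 ≤ p.1} := measurableSet_le measurable_snd measurable_fst
  have hT : MeasurableSet {p : ℝ × ℝ | p.1 < p.2} := measurableSet_lt measurable_fst measurable_snd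
  have hSc : {p : ℝ × ℝ | p.2 ≤ p.1}ᶜ = {p | p.1 < p.2} := by ext; simp
  have lower : ∫ p in {p : ℝ × ℝ | p.2 ≤ p.1}, F p ∂μ.prod μ =
      ∫ x, ⟪φ x, ∫ t in a..x, ψ t⟫_𝕜 ∂μ := by
    rw [← integral_indicator hS, integral_prod _ (hF.indicator hS)]
    refine setIntegral_congr_fun measurableSet_Ioc fun x hx => ?_
    change ∫ t in Ioc a b, (Iic x).indicator (fun t => ⟪φ x, ψ t⟫_𝕜) t = _
    rw [setIntegral_indicator measurableSet_Iic, Ioc_inter_Iic, min_eq_right hx.2,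
      intervalIntegral.integral_of_le hx.1.le,
      integral_inner (hψ.mono_set (Ioc_subset_Ioc_right hx.2))]
  have upper : ∫ p in {p : ℝ × ℝ | p.2 ≤ p.1}ᶜ, F p ∂μ.prod μ =
      ∫ x, ⟪∫ t in a..x, φ t, ψ x⟫_𝕜 ∂μ := by
    rw [hSc, ← integral_indicator hT, integral_prod_symm _ (hF.indicator hT)]
    refine setIntegral_congr_fun measurableSet_Ioc fun x hx => ?_
    change ∫ t in Ioc a b, (Iio x).indicator (fun t => ⟪φ t, ψ x⟫_𝕜) t = _
    have hIoo : Ioc a b ∩ Iio x = Ioo a x := by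
      ext t
      simp only [mem_inter_iff, mem_Ioc, mem_Iio, mem_Ioo]
      exact ⟨fun ⟨⟨hat, _⟩, htx⟩ => ⟨hat, htx⟩, fun ⟨hat, htx⟩ => ⟨⟨hat, htx.le.trans hx.2⟩, htx⟩⟩
    rw [setIntegral_indicator measurableSet_Iio, hIoo, ← integral_Ioc_eq_integral_Ioo,
      intervalIntegral.integral_of_le hx.1.le,
      integral_inner_left (hφ.mono_set (Ioc_subset_Ioc_right hx.2))]
  have total : ∫ p, F p ∂μ.prod μ = ⟪∫ x, φ x ∂μ, ∫ x, ψ x ∂μ⟫_𝕜 := by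
    rw [integral_prod _ hF]
    change ∫ x, ∫ t, ⟪φ x, ψ t⟫_𝕜 ∂μ ∂μ = _
    simp_rw [integral_inner (μ := μ) hψ]
    exact integral_inner_left (μ := μ) hφ _
  rw [← lower, ← upper, integral_add_compl hS hF, total]

theorem inner_sub_inner_eq_integral_inner_add_inner {a b : ℝ} (hab : a ≤ b) {y g z h : ℝ → E}
    (hg : IntegrableOn g (Icc a b)) (hh : IntegrableOn h (Icc a b))
    (hy : ∀ x ∈ Icc a b, y x - y a = ∫ t in a..x, g t)
    (hz : ∀ x ∈ Icc a b, z x - z a = ∫ t in a..x, h t) :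
    ⟪y b, z b⟫_𝕜 - ⟪y a, z a⟫_𝕜 = ∫ x in a..b, (⟪g x, z x⟫_𝕜 + ⟪y x, h x⟫_𝕜) := by
  set G : ℝ → E := fun x => ∫ t in a..x, g t
  set H : ℝ → E := fun x => ∫ t in a..x, h t
  have hg' : IntervalIntegrable g volume a b :=
    (intervalIntegrable_iff_integrableOn_Icc_of_le hab).2 hg
  have hh' : IntervalIntegrable h volume a b :=
    (intervalIntegrable_iff_integrableOn_Icc_of_le hab).2 hh
  have hG : ContinuousOn G (Icc a b) :=
    uIcc_of_le hab ▸ intervalIntegral.continuousOn_primitive_interval' hg' left_mem_uIcc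
  have hH : ContinuousOn H (Icc a b) :=
    uIcc_of_le hab ▸ intervalIntegral.continuousOn_primitive_interval' hh' left_mem_uIcc
  have hyG : ∀ x ∈ Icc a b, y x = y a + G x := fun x hx => eq_add_of_sub_eq' (hy x hx)
  have hzH : ∀ x ∈ Icc a b, z x = z a + H x := fun x hx => eq_add_of_sub_eq' (hz x hx)
  have split : EqOn (fun x => ⟪g x, z x⟫_𝕜 + ⟪y x, h x⟫_𝕜)
      (fun x => (⟪g x, z a⟫_𝕜 + ⟪y a, h x⟫_𝕜) + (⟪g x, H x⟫_𝕜 + ⟪G x, h x⟫_𝕜)) (uIcc a b) := by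
    intro x hx
    rw [uIcc_of_le hab] at hx
    simp only [hyG x hx, hzH x hx, inner_add_left, inner_add_right]
    ring
  have hIcc {f : ℝ → 𝕜} : IntegrableOn f (Icc a b) → IntervalIntegrable f volume a b :=
    (intervalIntegrable_iff_integrableOn_Icc_of_le hab).2
  have hgIoc : IntegrableOn g (Ioc a b) := hg.mono_set Ioc_subset_Icc_self
  have hhIoc : IntegrableOn h (Ioc a b) := hh.mono_set Ioc_subset_Icc_self
  have hconst : ∫ x in a..b, (⟪g x, z a⟫_𝕜 + ⟪y a, h x⟫_𝕜) = ⟪G b, z a⟫_𝕜 + ⟪y a, H b⟫_𝕜 := by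
    simp only [G, H, intervalIntegral.integral_of_le hab]
    rw [integral_add (hgIoc.inner_const _) (hhIoc.const_inner _), integral_inner_left hgIoc,
      integral_inner hhIoc]
  have hA : IntervalIntegrable (fun x => ⟪g x, z a⟫_𝕜 + ⟪y a, h x⟫_𝕜) volume a b :=
    hIcc ((hg.inner_const _).add (hh.const_inner _))
  have hgH : IntervalIntegrable (fun x => ⟪g x, H x⟫_𝕜) volume a b :=
    hIcc (hg.inner_continuousOn isCompact_Icc hH)
  have hGh : IntervalIntegrable (fun x => ⟪G x, h x⟫_𝕜) volume a b :=
    hIcc (hh.continuousOn_inner isCompact_Icc hG)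
  rw [intervalIntegral.integral_congr split, intervalIntegral.integral_add hA (hgH.add hGh),
    intervalIntegral.integral_add hgH hGh, hconst,
    integral_inner_primitive_add_integral_primitive_inner hab hg' hh',
    hyG b (right_mem_Icc.2 hab), hzH b (right_mem_Icc.2 hab)]
  simp only [inner_add_left, inner_add_right]
  ring

theorem integral_inner_add_inner_eq_zero_of_hasCompactSupport {y g z h : ℝ → E}
    (hy_supp : HasCompactSupport y) (hg : LocallyIntegrable g) (hh : LocallyIntegrable h)
    (hy : ∀ a b : ℝ, a ≤ b → y b - y a = ∫ x in a..b, g x)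
    (hz : ∀ a b : ℝ, a ≤ b → z b - z a = ∫ x in a..b, h x)
    (hint : Integrable fun x => ⟪g x, z x⟫_𝕜 + ⟪y x, h x⟫_𝕜) :
    ∫ x, (⟪g x, z x⟫_𝕜 + ⟪y x, h x⟫_𝕜) = 0 := by
  obtain ⟨R, hR, hy_zero⟩ := hy_supp.exists_pos_le_norm
  have hvanish : ∀ᶠ r in Filter.atTop, ∫ x in -r..r, (⟪g x, z x⟫_𝕜 + ⟪y x, h x⟫_𝕜) = 0 := by
    filter_upwards [Filter.eventually_ge_atTop R] with r hr
    have hr_neg : -r ≤ r := by linarith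
    rw [← inner_sub_inner_eq_integral_inner_add_inner hr_neg
      (hg.integrableOn_isCompact isCompact_Icc) (hh.integrableOn_isCompact isCompact_Icc)
      (fun x hx => hy _ _ hx.1) (fun x hx => hz _ _ hx.1),
      hy_zero r (by rwa [Real.norm_of_nonneg (by linarith)]),
      hy_zero (-r) (by rwa [norm_neg, Real.norm_of_nonneg (by linarith)])]
    simp
  exact tendsto_nhds_unique
    (intervalIntegral_tendsto_integral hint Filter.tendsto_neg_atTop_atBot Filter.tendsto_id)
    (tendsto_const_nhds.congr' (hvanish.mono fun _ h => h.symm))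

end InnerProduct

theorem integration_by_parts_quadratic_form_general (m : ℕ)
    (Q : ℝ → Matrix (Fin m) (Fin m) ℂ)
    (hQherm : ∀ᵐ x : ℝ, (Q x).IsHermitian)
    (y g z h : ℝ → EuclideanSpace ℂ (Fin m))
    (hy_supp : HasCompactSupport y)
    (hg_loc : LocallyIntegrable g volume)
    (hy_ftc : ∀ a b : ℝ, a ≤ b → y b - y a = ∫ x in a..b, g x)
    (hh_loc : LocallyIntegrable h volume)
    (hz_ftc : ∀ a b : ℝ, a ≤ b → z b - z a = ∫ x in a..b, h x)
    (hz_eq : ∀ᵐ x : ℝ, z x = g x - matApply (Q x) (y x))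
    (hint1 : Integrable (fun x =>
      (inner ℂ (y x) (h x + matApply (Q x) (z x) + matApply (Q x) (matApply (Q x) (y x))) : ℂ))
      volume)
    (hint2 : Integrable (fun x => ‖g x‖ ^ 2) volume)
    (hint3 : Integrable (fun x => (inner ℂ (y x) (matApply (Q x) (g x)) : ℂ)) volume) :
    -∫ x : ℝ,
        (inner ℂ (y x) (h x + matApply (Q x) (z x) + matApply (Q x) (matApply (Q x) (y x))) : ℂ) =
      ∫ x : ℝ, ((inner ℂ (g x) (z x) : ℂ) - (inner ℂ (y x) (matApply (Q x) (g x)) : ℂ)) ∧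
    -∫ x : ℝ,
        (inner ℂ (y x) (h x + matApply (Q x) (z x) + matApply (Q x) (matApply (Q x) (y x))) : ℂ) =
      ((∫ x : ℝ, (‖g x‖ ^ 2 - 2 * (inner ℂ (y x) (matApply (Q x) (g x)) : ℂ).re) : ℝ) : ℂ) := by
  set W : ℝ → ℂ := fun x => ⟪y x, matApply (Q x) (g x)⟫_ℂ
  have hform : ∀ᵐ x, ⟪g x, z x⟫_ℂ - W x = ((‖g x‖ ^ 2 - 2 * (W x).re : ℝ) : ℂ) := by
    filter_upwards [hz_eq, hQherm] with x hzx hQx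
    rw [hzx]
    exact (Matrix.isSymmetric_toEuclideanLin_iff.2 hQx).inner_sub_apply_sub_inner (g x) (y x)
  have hyh : ∀ᵐ x, ⟪y x, h x + matApply (Q x) (z x) + matApply (Q x) (matApply (Q x) (y x))⟫_ℂ =
      ⟪y x, h x⟫_ℂ + W x := by
    filter_upwards [hz_eq] with x hzx
    rw [add_assoc, ← matApply_add, hzx, sub_add_cancel, inner_add_right]
  have igz : Integrable fun x => ⟪g x, z x⟫_ℂ :=
    ((hint2.sub (hint3.re.const_mul 2)).ofReal.add hint3).congr
      (hform.mono fun _ hx => (eq_add_of_sub_eq hx).symm)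
  have iyh : Integrable fun x => ⟪y x, h x⟫_ℂ :=
    (hint1.sub hint3).congr (hyh.mono fun _ hx => sub_eq_of_eq_add hx)
  have hzero := integral_inner_add_inner_eq_zero_of_hasCompactSupport hy_supp hg_loc hh_loc hy_ftc
    hz_ftc (igz.add iyh)
  rw [integral_add igz iyh] at hzero
  have first : -∫ x, ⟪y x, h x + matApply (Q x) (z x) + matApply (Q x) (matApply (Q x) (y x))⟫_ℂ =
      ∫ x, (⟪g x, z x⟫_ℂ - W x) := by
    rw [integral_congr_ae hyh, integral_add iyh hint3, integral_sub igz hint3]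
    linear_combination -hzero
  exact ⟨first, first.trans ((integral_congr_ae hform).trans integral_complex_ofReal)⟩

/-- Integration by parts for the quadratic form: if `y` is compactly
supported and locally absolutely continuous with a.e. derivative `g`, `z` is locally
absolutely continuous with a.e. derivative `h`, `z = g − Q·y` a.e., and
`y^{[2]} := h + Q·z + Q²·y`, then (assuming the stated integrabilities)
`−∫ ⟨y^{[2]}, y⟩ = ∫ (⟨z, g⟩ − ⟨Qg, y⟩) = ∫ (‖g‖² − 2 Re ⟨Qg, y⟩)`.
Here `⟨u, z⟩` (linear in the first argument) is Mathlib's `inner z u`. -/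
theorem integration_by_parts_quadratic_form (m : ℕ) (hm : 1 ≤ m)
    (Q : ℝ → Matrix (Fin m) (Fin m) ℂ)
    (hQloc : ∀ i j : Fin m, LocallyIntegrable (fun x => ‖Q x i j‖ ^ 2) volume)
    (hQherm : ∀ᵐ x : ℝ, (Q x).IsHermitian)
    (y g z h : ℝ → EuclideanSpace ℂ (Fin m))
    (hy_supp : HasCompactSupport y)
    (hg_loc : LocallyIntegrable g volume)
    (hy_ftc : ∀ a b : ℝ, a ≤ b → y b - y a = ∫ x in a..b, g x)
    (hh_loc : LocallyIntegrable h volume)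
    (hz_ftc : ∀ a b : ℝ, a ≤ b → z b - z a = ∫ x in a..b, h x)
    (hz_eq : ∀ᵐ x : ℝ, z x = g x - matApply (Q x) (y x))
    (hint1 : Integrable (fun x =>
      (inner ℂ (y x) (h x + matApply (Q x) (z x) + matApply (Q x) (matApply (Q x) (y x))) : ℂ))
      volume)
    (hint2 : Integrable (fun x => ‖g x‖ ^ 2) volume)
    (hint3 : Integrable (fun x => (inner ℂ (y x) (matApply (Q x) (g x)) : ℂ)) volume) :
    -∫ x : ℝ,
        (inner ℂ (y x) (h x + matApply (Q x) (z x) + matApply (Q x) (matApply (Q x) (y x))) : ℂ) =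
      ∫ x : ℝ, ((inner ℂ (g x) (z x) : ℂ) - (inner ℂ (y x) (matApply (Q x) (g x)) : ℂ)) ∧
    -∫ x : ℝ,
        (inner ℂ (y x) (h x + matApply (Q x) (z x) + matApply (Q x) (matApply (Q x) (y x))) : ℂ) =
      ((∫ x : ℝ, (‖g x‖ ^ 2 - 2 * (inner ℂ (y x) (matApply (Q x) (g x)) : ℂ).re) : ℝ) : ℂ) :=
  integration_by_parts_quadratic_form_general m Q hQherm y g z h hy_supp hg_loc hy_ftc hh_loc hz_ftc
    hz_eq hint1 hint2 hint3
end
end
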